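/- Let (W,S) be a Coxeter system with S finite such that S admits a partition S = S₁ ∪ S₂ into nonempty parts with m_{s,t} = 2 for all s ∈ S₁, t ∈ S₂. Then the cactus group C(W,S) is isomorphic to the direct product C(W_{S₁}, S₁) × C(W_{S₂}, S₂) of the cactus groups of the two standard parabolic Coxeter systems. -/

import Mathlib

/-!  Common framework: cactus groups of Coxeter systems. -/

namespace CactusFormal

open scoped Classical
set_option linter.unusedSectionVars false
set_option maxHeartbeats 1000000

variable {B : Type*} {W : Type*} [Group W] {M : CoxeterMatrix B}

/-- A subset `X` of `S` is irreducible (w.r.t. the Coxeter matrix `M`) if it admits no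
partition into two nonempty parts that pairwise commute (label `2`). -/
def IsIrred (M : CoxeterMatrix B) (X : Set B) : Prop :=
  ¬ ∃ X₁ X₂ : Set B, X₁.Nonempty ∧ X₂.Nonempty ∧ Disjoint X₁ X₂ ∧ X₁ ∪ X₂ = X ∧
      ∀ x ∈ X₁, ∀ y ∈ X₂, M x y = 2

/-- The standard parabolic subgroup `W_X`. -/
def parabolic (cs : CoxeterSystem M W) (X : Set B) : Subgroup W :=
  Subgroup.closure (cs.simple '' X)

/-- `w` is the longest element `ω_X`: a nontrivial element of `W_X` permuting
the simple reflections indexed by `X` by conjugation. -/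
def IsOmega (cs : CoxeterSystem M W) (X : Set B) (w : W) : Prop :=
  w ∈ parabolic cs X ∧ w ≠ 1 ∧
    ∀ x ∈ X, ∃ x' ∈ X, w * cs.simple x * w⁻¹ = cs.simple x'

/-- The element `ω_X` (junk value `1` if it does not exist). -/
noncomputable def omega (cs : CoxeterSystem M W) (X : Set B) : W :=
  if h : ∃ w, IsOmega cs X w then h.choose else 1

/-- The family `F` of nonempty subsets `X` of `S` with `W_X` finite and irreducible. -/
def F (cs : CoxeterSystem M W) : Set (Set B) :=
  {X | X.Nonempty ∧ (parabolic cs X : Set W).Finite ∧ IsIrred M X}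

/-- The subset `ω_X Y ω_X⁻¹` of `S`, i.e. the set of indices whose simple reflection is
the conjugate by `ω_X` of a simple reflection indexed by `Y`. -/
def omegaSet (cs : CoxeterSystem M W) (X Y : Set B) : Set B :=
  {z | ∃ y ∈ Y, cs.simple z = omega cs X * cs.simple y * (omega cs X)⁻¹}

/-- `Ω(X)`: the elements `Y ∈ F`, `Y ≠ X`, with `ω_X Y ω_X ⊆ S`. -/
def Omega (cs : CoxeterSystem M W) (X : Set B) : Set (Set B) :=
  {Y | Y ∈ F cs ∧ Y ≠ X ∧
    ∀ y ∈ Y, ∃ z, omega cs X * cs.simple y * (omega cs X)⁻¹ = cs.simple z}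

/-- `Ω₀(X)`: the elements of `F` properly contained in `X`. -/
def Omega0 (cs : CoxeterSystem M W) (X : Set B) : Set (Set B) :=
  {Y | Y ∈ F cs ∧ Y ⊂ X}

/-- `Ω_∞(X)`: the elements `Y` of `F` with `X ∪ Y` not irreducible. -/
def OmegaInf (cs : CoxeterSystem M W) (X : Set B) : Set (Set B) :=
  {Y | Y ∈ F cs ∧ ¬ IsIrred M (X ∪ Y)}

/-- The defining relators of the cactus group:
(R1) `c_X² = 1`; (R2) `c_X c_Y = c_{ω_X(Y)} c_X` for `Y ∈ Ω₀(X)`;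
(R3) `c_X c_Y = c_Y c_X` for `Y ∈ Ω_∞(X)`. -/
def cactusRels (cs : CoxeterSystem M W) : Set (FreeGroup (F cs)) :=
  {r | (∃ X : F cs, r = .of X * .of X) ∨
    (∃ X Y Z : F cs, (Y : Set B) ∈ Omega0 cs X ∧ (Z : Set B) = omegaSet cs X Y ∧
      r = .of X * .of Y * (.of Z * .of X)⁻¹) ∨
    (∃ X Y : F cs, (Y : Set B) ∈ OmegaInf cs X ∧
      r = .of X * .of Y * (.of Y * .of X)⁻¹)}

/-- The cactus group `C(W,S)`. -/
abbrev Cactus (cs : CoxeterSystem M W) := PresentedGroup (cactusRels cs)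

/-- The generator `c_X` of the cactus group, for `X ∈ F`. -/
def gen (cs : CoxeterSystem M W) (X : F cs) : Cactus cs := PresentedGroup.of X

/-- The relation `≡₀` on `F`: `Y ≡₀ Z` iff `Z = ω_X Y ω_X` for some `X ∈ F`. -/
def equivZero (cs : CoxeterSystem M W) (Y Z : Set B) : Prop :=
  Y ∈ F cs ∧ Z ∈ F cs ∧ ∃ X ∈ F cs, Z = omegaSet cs X Y

/-- The relation `≡`: the reflexive-transitive closure of `≡₀`. -/
def cEquiv (cs : CoxeterSystem M W) : Set B → Set B → Prop :=
  Relation.ReflTransGen (equivZero cs)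

/-- The set of `≡`-equivalence classes on `F`. -/
def classes (cs : CoxeterSystem M W) :=
  Quot (fun X Y : F cs => cEquiv cs X Y)

/-- `m`: the number of `≡`-equivalence classes on `F`. -/
noncomputable def numClasses (cs : CoxeterSystem M W) : ℕ := Nat.card (classes cs)

/-- `Λ` is a transversal for `≡`: it contains exactly one element of each class. -/
def IsTransversal (cs : CoxeterSystem M W) (Λ : Set (Set B)) : Prop :=
  Λ ⊆ F cs ∧ ∀ X ∈ F cs, ∃! Y, Y ∈ Λ ∧ cEquiv cs X Y

/-- A section `(Λ, Ψ)` for `(W,S)`, writing `Ψ X = (X̄, X̊)`. -/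
structure IsSection (cs : CoxeterSystem M W) (Λ : Set (Set B))
    (Ψ : Set B → Set B × Set B) : Prop where
  subset : Λ ⊆ F cs
  eq_of_mem : ∀ X ∈ Λ, Ψ X = (X, X)
  bar_mem : ∀ X ∈ F cs, (Ψ X).1 ∈ Λ
  ring_mem : ∀ X ∈ F cs, (Ψ X).2 ∈ Λ
  ring_subset : ∀ X ∈ F cs, (Ψ X).2 ⊆ (Ψ X).1
  omega_bar_ring : ∀ X ∈ F cs, omegaSet cs (Ψ X).1 (Ψ X).2 = X
  reducible_pairs : ∀ Y ∈ F cs, ∀ Z ∈ F cs, ¬ IsIrred M (Y ∪ Z) →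
    ∃ X ∈ Λ, Y ∈ Omega cs X ∧ Z ∈ Omega cs X ∧
      (omegaSet cs X Y ∈ Λ ∨ omegaSet cs X Z ∈ Λ)

/-- `Λ` is a cross section with section map `Ψ`: additionally, for every `X ∈ F`,
`Ψ X` is the unique pair `(Y, Z) ∈ Λ × Λ` with `ω_Y(Z) = X`
(where `ω_Y(Z)` is defined for `Z ∈ Ω(Y) ∪ {Y}`). -/
def IsCrossSection (cs : CoxeterSystem M W) (Λ : Set (Set B))
    (Ψ : Set B → Set B × Set B) : Prop :=
  IsSection cs Λ Ψ ∧ ∀ X ∈ F cs, ∀ Y Z : Set B,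
    (Y ∈ Λ ∧ Z ∈ Λ ∧ (Z ∈ Omega cs Y ∨ Z = Y) ∧ omegaSet cs Y Z = X) ↔ Ψ X = (Y, Z)


/-- The Coxeter matrix restricted to a subset of the generators. -/
def restrictMatrix (M : CoxeterMatrix B) (S : Set B) : CoxeterMatrix S where
  M := Matrix.of fun i j => M i j
  isSymm := by
    ext i j
    simp only [Matrix.transpose_apply, Matrix.of_apply]
    exact M.isSymm.apply i j
  diagonal := fun i => M.diagonal i
  off_diagonal := fun i j h => M.off_diagonal i j fun e => h (Subtype.ext e)

/-! ### Geometric representation -/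

noncomputable section Geom

open Real

variable (M) in
/-- The entries of the standard bilinear form. -/
def kk (i j : B) : ℝ := if M i j = 0 then -1 else -Real.cos (Real.pi / (M i j : ℝ))

lemma kk_symm (i j : B) : kk M i j = kk M j i := by
  unfold kk; rw [M.symmetric i j]

lemma kk_diag (i : B) : kk M i i = 1 := by
  unfold kk; rw [M.diagonal i]; norm_num

lemma two_le_M {i j : B} (hij : i ≠ j) (h0 : M i j ≠ 0) : 2 ≤ M i j := by
  have h1 := M.off_diagonal i j hij
  omega

lemma kk_nonpos {i j : B} (hij : i ≠ j) : kk M i j ≤ 0 := by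
  unfold kk
  split
  · norm_num
  · rename_i h0
    have h2 : (2 : ℝ) ≤ (M i j : ℝ) := by exact_mod_cast two_le_M hij h0
    have hpos : (0:ℝ) < (M i j : ℝ) := by linarith
    have hle : Real.pi / (M i j : ℝ) ≤ Real.pi / 2 := by
      gcongr
    have hge : 0 ≤ Real.pi / (M i j : ℝ) := by positivity
    have := Real.cos_nonneg_of_mem_Icc (x := Real.pi / (M i j : ℝ))
      ⟨by linarith [Real.pi_pos], hle⟩
    linarith

lemma M_eq_two_of_kk_eq_zero {i j : B} (hij : i ≠ j) (hz : kk M i j = 0) : M i j = 2 := by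
  unfold kk at hz
  split at hz
  · norm_num at hz
  · rename_i h0
    have h2 : (2 : ℝ) ≤ (M i j : ℝ) := by exact_mod_cast two_le_M hij h0
    have hpos : (0:ℝ) < (M i j : ℝ) := by linarith
    have hle : Real.pi / (M i j : ℝ) ≤ Real.pi / 2 := by
      gcongr
    have hgt : 0 < Real.pi / (M i j : ℝ) := by positivity
    have hcos : Real.cos (Real.pi / (M i j : ℝ)) = 0 := by linarith
    -- if π/m < π/2 then cos > 0
    have : ¬ (Real.pi / (M i j : ℝ) < Real.pi / 2) := by
      intro hlt
      have := Real.cos_pos_of_mem_Ioo (x := Real.pi / (M i j : ℝ))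
        ⟨by linarith [Real.pi_pos, Real.pi_div_two_pos], hlt⟩
      linarith
    have heq : Real.pi / (M i j : ℝ) = Real.pi / 2 := le_antisymm hle (not_lt.1 this)
    have : (M i j : ℝ) = 2 := by
      have hπ := Real.pi_ne_zero
      field_simp at heq
      linarith
    exact_mod_cast this

variable [Fintype B]

variable (M) in
/-- The standard bilinear form. -/
def bform (u v : B → ℝ) : ℝ := ∑ i, ∑ j, u i * v j * kk M i j

/-- basis vector -/
def ee (i : B) : B → ℝ := Pi.single i 1

@[simp] lemma ee_apply_self (i : B) : ee i i = 1 := by simp [ee]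

lemma ee_apply_ne {i j : B} (h : j ≠ i) : ee i j = 0 := by simp [ee, Pi.single_eq_of_ne h]

lemma bform_add_right (u v w : B → ℝ) : bform M u (v + w) = bform M u v + bform M u w := by
  unfold bform
  rw [← Finset.sum_add_distrib]
  refine Finset.sum_congr rfl fun i _ => ?_
  rw [← Finset.sum_add_distrib]
  refine Finset.sum_congr rfl fun j _ => ?_
  simp; ring

lemma bform_sub_right (u v w : B → ℝ) : bform M u (v - w) = bform M u v - bform M u w := by
  unfold bform
  rw [← Finset.sum_sub_distrib]
  refine Finset.sum_congr rfl fun i _ => ?_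
  rw [← Finset.sum_sub_distrib]
  refine Finset.sum_congr rfl fun j _ => ?_
  simp; ring

lemma bform_smul_right (u v : B → ℝ) (a : ℝ) : bform M u (a • v) = a * bform M u v := by
  unfold bform
  rw [Finset.mul_sum]
  refine Finset.sum_congr rfl fun i _ => ?_
  rw [Finset.mul_sum]
  refine Finset.sum_congr rfl fun j _ => ?_
  simp; ring

lemma bform_symm (u v : B → ℝ) : bform M u v = bform M v u := by
  unfold bform
  rw [Finset.sum_comm]
  refine Finset.sum_congr rfl fun j _ => ?_
  refine Finset.sum_congr rfl fun i _ => ?_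
  rw [kk_symm]; ring

lemma bform_add_left (u v w : B → ℝ) : bform M (u + v) w = bform M u w + bform M v w := by
  rw [bform_symm, bform_add_right, bform_symm w u, bform_symm w v]

lemma bform_sub_left (u v w : B → ℝ) : bform M (u - v) w = bform M u w - bform M v w := by
  rw [bform_symm, bform_sub_right, bform_symm w u, bform_symm w v]

lemma bform_smul_left (u v : B → ℝ) (a : ℝ) : bform M (a • u) v = a * bform M u v := by
  rw [bform_symm, bform_smul_right, bform_symm]

lemma bform_ee_left (i : B) (v : B → ℝ) : bform M (ee i) v = ∑ j, v j * kk M i j := by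
  unfold bform
  rw [Finset.sum_eq_single i]
  · simp [ee]
  · intro b _ hb
    have : ∀ j : B, ee i b * v j * kk M b j = 0 := by
      intro j; rw [ee_apply_ne hb]; ring
    simp [this]
  · intro h; exact absurd (Finset.mem_univ i) h

lemma bform_ee_ee (i j : B) : bform M (ee i) (ee j) = kk M i j := by
  rw [bform_ee_left, Finset.sum_eq_single j]
  · simp [ee]
  · intro b _ hb
    rw [ee_apply_ne hb]; ring
  · intro h; exact absurd (Finset.mem_univ j) h

variable (M) in
/-- The reflection attached to an index. -/
def rflE (i : B) : Module.End ℝ (B → ℝ) where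
  toFun v := v - (2 * bform M (ee i) v) • ee i
  map_add' u v := by
    rw [bform_add_right]; module
  map_smul' a v := by
    rw [bform_smul_right]
    simp only [RingHom.id_apply]
    module

lemma rflE_apply (i : B) (v : B → ℝ) :
    rflE M i v = v - (2 * bform M (ee i) v) • ee i := rfl

lemma bform_rflE (i : B) (u v : B → ℝ) :
    bform M (rflE M i u) (rflE M i v) = bform M u v := by
  rw [rflE_apply, rflE_apply, bform_sub_left, bform_sub_right, bform_sub_right,
    bform_smul_left, bform_smul_right, bform_smul_left, bform_smul_right, bform_ee_ee,
    kk_diag, bform_symm (ee i) u]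
  ring

lemma rflE_fix {i : B} {v : B → ℝ} (h : bform M (ee i) v = 0) : rflE M i v = v := by
  rw [rflE_apply, h]; simp

lemma rflE_ee_self (i : B) : rflE M i (ee i) = -(ee i) := by
  rw [rflE_apply, bform_ee_ee, kk_diag]; module


lemma pow_fix {T : Module.End ℝ (B → ℝ)} {v : B → ℝ} (h : T v = v) (k : ℕ) :
    (T ^ k) v = v := by
  induction k with
  | zero => simp
  | succ n ih => rw [pow_succ, Module.End.mul_apply, h, ih]

theorem rflE_order {i j : B} (hij : i ≠ j) (h0 : M i j ≠ 0) :
    ((rflE M i * rflE M j) ^ (M i j) : Module.End ℝ (B → ℝ)) = 1 := by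
  have h2 : 2 ≤ M i j := two_le_M hij h0
  have hm2 : (2:ℝ) ≤ (M i j : ℝ) := by exact_mod_cast h2
  have hmpos : (0:ℝ) < (M i j : ℝ) := by linarith
  set θ : ℝ := Real.pi / (M i j : ℝ) with hθ
  have hθpos : 0 < θ := by rw [hθ]; positivity
  have hθle : θ ≤ Real.pi / 2 := by rw [hθ]; gcongr
  set c : ℝ := Real.cos θ with hc
  set s0 : ℝ := Real.sin θ with hs0
  have hs0pos : 0 < s0 := Real.sin_pos_of_pos_of_lt_pi hθpos (by linarith [Real.pi_pos])
  have hs0ne : s0 ≠ 0 := ne_of_gt hs0pos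
  have hs2 : s0 ^ 2 = 1 - c ^ 2 := by rw [hs0, hc, Real.sin_sq]
  have hkk : kk M i j = -c := by rw [kk, if_neg h0]
  have hkkji : kk M j i = -c := by rw [kk_symm]; exact hkk
  set f2 : B → ℝ := c • ee i + ee j with hf2
  have hb11 : bform M (ee i) (ee i) = (1:ℝ) := by rw [bform_ee_ee, kk_diag]
  have hbjj : bform M (ee j) (ee j) = (1:ℝ) := by rw [bform_ee_ee, kk_diag]
  have hbij : bform M (ee i) (ee j) = -c := by rw [bform_ee_ee]; exact hkk
  have hbji : bform M (ee j) (ee i) = -c := by rw [bform_ee_ee]; exact hkkji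
  have hbif2 : bform M (ee i) f2 = 0 := by
    rw [hf2, bform_add_right, bform_smul_right, hb11, hbij]; ring
  have hbjf2 : bform M (ee j) f2 = s0 ^ 2 := by
    rw [hf2, bform_add_right, bform_smul_right, hbji, hbjj, hs2]; ring
  have hA1 : rflE M i (ee i) = -(ee i) := rflE_ee_self i
  have hA2 : rflE M i f2 = f2 := rflE_fix hbif2
  have hA3 : rflE M j (ee i) = (1 - 2*c^2) • ee i + (2*c) • f2 := by
    rw [rflE_apply, hbji, hf2]; module
  have hA4 : rflE M j f2 = (2*c*s0^2) • ee i + (1 - 2*s0^2) • f2 := by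
    rw [rflE_apply, hbjf2, hf2]; module
  set T : Module.End ℝ (B → ℝ) := rflE M i * rflE M j with hT
  have hT1 : T (ee i) = (2*c^2 - 1) • ee i + (2*c) • f2 := by
    rw [hT, Module.End.mul_apply, hA3, map_add, map_smul, map_smul, hA1, hA2]; module
  have hT2 : T f2 = (-(2*c)*s0^2) • ee i + (1 - 2*s0^2) • f2 := by
    rw [hT, Module.End.mul_apply, hA4, map_add, map_smul, map_smul, hA1, hA2]; module
  have hK : ∀ k : ℕ, (T ^ k) (ee i)
        = Real.cos (2*(k:ℝ)*θ) • ee i + (Real.sin (2*(k:ℝ)*θ)/s0) • f2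
      ∧ (T ^ k) f2
        = (-(s0 * Real.sin (2*(k:ℝ)*θ))) • ee i + Real.cos (2*(k:ℝ)*θ) • f2 := by
    intro k
    induction k with
    | zero => norm_num
    | succ n ih =>
      obtain ⟨ih1, ih2⟩ := ih
      have hexp : 2*((n:ℝ)+1)*θ = 2*(n:ℝ)*θ + 2*θ := by ring
      have e1 : Real.cos (2*((n:ℝ)+1)*θ)
          = Real.cos (2*(n:ℝ)*θ) * (2*c^2-1) - Real.sin (2*(n:ℝ)*θ) * (2*s0*c) := by
        rw [hexp, Real.cos_add, Real.cos_two_mul, Real.sin_two_mul, ← hc, ← hs0]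
      have e2 : Real.sin (2*((n:ℝ)+1)*θ)/s0
          = (Real.sin (2*(n:ℝ)*θ)/s0) * (2*c^2-1) + Real.cos (2*(n:ℝ)*θ) * (2*c) := by
        rw [hexp, Real.sin_add, Real.cos_two_mul, Real.sin_two_mul, ← hc, ← hs0]
        field_simp
      have e3 : -(s0 * Real.sin (2*((n:ℝ)+1)*θ))
          = Real.cos (2*(n:ℝ)*θ) * (-(2*c)*s0^2) + (-(s0 * Real.sin (2*(n:ℝ)*θ))) * (1-2*s0^2) := by
        rw [hexp, Real.sin_add, Real.cos_two_mul, Real.sin_two_mul, ← hc, ← hs0]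
        linear_combination (-2*s0*Real.sin (2*(n:ℝ)*θ)) * hs2
      have e4 : Real.cos (2*((n:ℝ)+1)*θ)
          = (Real.sin (2*(n:ℝ)*θ)/s0) * (-(2*c)*s0^2) + Real.cos (2*(n:ℝ)*θ) * (1-2*s0^2) := by
        have hdiv : Real.sin (2*(n:ℝ)*θ)/s0 * (-(2*c)*s0^2)
            = -(2*c*s0) * Real.sin (2*(n:ℝ)*θ) := by field_simp
        rw [hexp, Real.cos_add, Real.cos_two_mul, Real.sin_two_mul, ← hc, ← hs0, hdiv]
        linear_combination (2*Real.cos (2*(n:ℝ)*θ)) * hs2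
      constructor
      · rw [pow_succ, Module.End.mul_apply, hT1, map_add, map_smul, map_smul, ih1, ih2]
        push_cast
        rw [e1, e2]
        module
      · rw [pow_succ, Module.End.mul_apply, hT2, map_add, map_smul, map_smul, ih1, ih2]
        push_cast
        rw [e3, e4]
        module
  have hang : 2*((M i j : ℕ):ℝ)*θ = 2*Real.pi := by
    rw [hθ]; field_simp
  have hKm := hK (M i j)
  rw [hang, Real.cos_two_pi, Real.sin_two_pi] at hKm
  obtain ⟨hKm1, hKm2⟩ := hKm
  have hKm1' : (T ^ (M i j)) (ee i) = ee i := by rw [hKm1]; module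
  have hKm2' : (T ^ (M i j)) f2 = f2 := by rw [hKm2]; module
  have hker : ∀ v, bform M (ee i) v = 0 → bform M (ee j) v = 0 → (T ^ (M i j)) v = v := by
    intro v hv1 hv2
    apply pow_fix
    rw [hT, Module.End.mul_apply, rflE_fix hv2, rflE_fix hv1]
  apply LinearMap.ext
  intro v
  rw [Module.End.one_apply]
  set a : ℝ := bform M (ee i) v with ha
  set b : ℝ := (bform M (ee j) v + c * a)/s0^2 with hb
  set q : (B → ℝ) := v - a • ee i - b • f2 with hq
  have hq1 : bform M (ee i) q = 0 := by
    rw [hq, bform_sub_right, bform_sub_right, bform_smul_right, bform_smul_right,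
      hb11, hbif2, ← ha]
    ring
  have hq2 : bform M (ee j) q = 0 := by
    rw [hq, bform_sub_right, bform_sub_right, bform_smul_right, bform_smul_right,
      hbji, hbjf2, hb]
    have : s0 ^ 2 ≠ 0 := pow_ne_zero 2 hs0ne
    field_simp
    ring
  have hv : v = a • ee i + b • f2 + q := by rw [hq]; module
  rw [hv, map_add, map_add, map_smul, map_smul, hKm1', hKm2', hker q hq1 hq2]

theorem rflE_liftable : M.IsLiftable (rflE M) := by
  intro i j
  rcases eq_or_ne i j with rfl | hij
  · rw [M.diagonal i, pow_one]
    apply LinearMap.ext; intro v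
    rw [Module.End.mul_apply, Module.End.one_apply, rflE_apply, rflE_apply (M := M) i v,
      bform_sub_right, bform_smul_right, bform_ee_ee, kk_diag]
    module
  rcases eq_or_ne (M i j) 0 with h0 | h0
  · rw [h0, pow_zero]
  · exact rflE_order hij h0

section Rho

variable (cs : CoxeterSystem M W)

/-- The geometric representation. -/
def grep : W →* Module.End ℝ (B → ℝ) := cs.lift ⟨rflE M, rflE_liftable⟩

@[simp] lemma grep_simple (i : B) : grep cs (cs.simple i) = rflE M i :=
  cs.lift_apply_simple rflE_liftable i

lemma bform_grep (w : W) : ∀ u v, bform M (grep cs w u) (grep cs w v) = bform M u v := by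
  induction w using cs.simple_induction with
  | simple i => intro u v; rw [grep_simple]; exact bform_rflE i u v
  | one => intro u v; rw [map_one]; rfl
  | mul w w' hw hw' =>
    intro u v
    rw [map_mul, Module.End.mul_apply, Module.End.mul_apply, hw, hw']

lemma grep_conj {u : W} {x y : B} (h : u * cs.simple x * u⁻¹ = cs.simple y) :
    grep cs u (ee x) = ee y ∨ grep cs u (ee x) = -(ee y) := by
  have hyu : cs.simple y * u = u * cs.simple x := by rw [← h]; group
  have hρ : grep cs (cs.simple y) (grep cs u (ee x)) = -(grep cs u (ee x)) := by
    calc grep cs (cs.simple y) (grep cs u (ee x))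
        = grep cs (cs.simple y * u) (ee x) := by rw [map_mul]; rfl
      _ = grep cs (u * cs.simple x) (ee x) := by rw [hyu]
      _ = grep cs u (grep cs (cs.simple x) (ee x)) := by rw [map_mul]; rfl
      _ = -(grep cs u (ee x)) := by rw [grep_simple, rflE_ee_self, map_neg]
  set β := grep cs u (ee x) with hβ
  set t : ℝ := bform M (ee y) β with ht
  have hb : β = t • ee y := by
    rw [grep_simple, rflE_apply, ← ht] at hρ
    have h2 : (2:ℝ) • β = (2:ℝ) • (t • ee y) := by
      have heq : β = -β + (2 * t) • ee y := by
        rw [← sub_eq_iff_eq_add]; exact hρ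
      rw [two_smul]
      nth_rewrite 1 [heq]
      module
    exact smul_right_injective (B → ℝ) two_ne_zero h2
  have hββ : bform M β β = 1 := by
    rw [hβ, bform_grep, bform_ee_ee, kk_diag]
  rw [hb, bform_smul_left, bform_smul_right, bform_ee_ee, kk_diag] at hββ
  have ht2 : t * t = 1 := by nlinarith [hββ]
  rcases mul_self_eq_one_iff.1 ht2 with h1 | h1
  · left; rw [hb, h1, one_smul]
  · right; rw [hb, h1]; module

lemma grep_parab_coord {X : Set B} {u : W} (hu : u ∈ parabolic cs X) :
    ∀ (v : B → ℝ) (z : B), z ∉ X → grep cs u v z = v z := by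
  unfold parabolic at hu
  induction hu using Subgroup.closure_induction with
  | mem g hg =>
    obtain ⟨x, hx, rfl⟩ := hg
    intro v z hz
    have hzx : z ≠ x := fun h => hz (h ▸ hx)
    rw [grep_simple, rflE_apply, Pi.sub_apply, Pi.smul_apply, ee_apply_ne hzx]
    simp
  | one => intro v z _; rw [map_one]; rfl
  | mul a b _ _ pa pb =>
    intro v z hz
    rw [map_mul, Module.End.mul_apply, pa _ _ hz, pb _ _ hz]
  | inv a _ pa =>
    intro v z hz
    conv_rhs => rw [show v = grep cs a (grep cs a⁻¹ v) by
      rw [← Module.End.mul_apply, ← map_mul, mul_inv_cancel, map_one, Module.End.one_apply]]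
    rw [pa _ _ hz]

end Rho


section Positivity

open CoxeterSystem

variable (cs : CoxeterSystem M W)

lemma ee_nonneg (i z : B) : 0 ≤ ee i z := by
  rcases eq_or_ne z i with rfl | h
  · rw [ee_apply_self]; norm_num
  · rw [ee_apply_ne h]

lemma not_reduced_pair (l1 l2 : List B) (x : B) : ¬ cs.IsReduced (l1 ++ x :: x :: l2) := by
  intro hred
  have hπ : cs.wordProd (l1 ++ x :: x :: l2) = cs.wordProd (l1 ++ l2) := by
    rw [cs.wordProd_append, cs.wordProd_append, cs.wordProd_cons, cs.wordProd_cons,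
      cs.simple_mul_simple_cancel_left]
  have h1 : cs.length (cs.wordProd (l1 ++ x :: x :: l2)) ≤ l1.length + l2.length := by
    rw [hπ]
    calc cs.length (cs.wordProd (l1 ++ l2)) ≤ (l1 ++ l2).length := cs.length_wordProd_le _
    _ = l1.length + l2.length := by simp
  rw [CoxeterSystem.IsReduced] at hred
  rw [hred] at h1
  simp at h1

lemma two_letter_reduced {a b : B} (hab : a ≠ b) :
    ∀ (w : List B), (∀ x ∈ w, x = a ∨ x = b) → cs.IsReduced w →
      w = alternatingWord a b w.length ∨ w = alternatingWord b a w.length := by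
  intro w
  induction w with
  | nil => intro _ _; left; rfl
  | cons x w' ih =>
    intro hlet hred
    have hred' : cs.IsReduced w' := by
      have := hred.drop 1; simpa using this
    have hlet' : ∀ z ∈ w', z = a ∨ z = b := fun z hz => hlet z (List.mem_cons_of_mem x hz)
    rcases w' with _ | ⟨y, rest⟩
    · rcases hlet x (List.mem_cons_self) with rfl | rfl
      · right; simp [alternatingWord]
      · left; simp [alternatingWord]
    · have hxy : x ≠ y := by
        rintro rfl
        exact (not_reduced_pair cs [] rest x) hred
      obtain ⟨m, hm⟩ : ∃ m, (y :: rest).length = m + 1 := ⟨rest.length, by simp⟩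
      have hlen : (x :: y :: rest).length = (m + 1) + 1 := by simpa using hm
      rcases ih hlet' hred' with h' | h'
      · left
        rw [hm] at h'
        have hy : y = (if Even m then b else a) := by
          rw [alternatingWord_succ'] at h'
          exact (List.cons_eq_cons.mp h').1
        have hx : x = (if Even (m+1) then b else a) := by
          rcases Nat.even_or_odd m with hme | hmo
          · have hyb : y = b := by rw [hy, if_pos hme]
            have hxa : x = a := by
              rcases hlet x (List.mem_cons_self) with h | h
              · exact h
              · exact absurd (h.trans hyb.symm) hxy
            rw [hxa, if_neg (by simp [Nat.even_add_one, hme])]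
          · have hya : y = a := by rw [hy, if_neg (Nat.not_even_iff_odd.mpr hmo)]
            have hxb : x = b := by
              rcases hlet x (List.mem_cons_self) with h | h
              · exact absurd (h.trans hya.symm) hxy
              · exact h
            rw [hxb, if_pos (by simp [Nat.even_add_one, Nat.not_even_iff_odd.mpr hmo])]
        rw [hlen, alternatingWord_succ', ← hx, ← h']
      · right
        rw [hm] at h'
        have hy : y = (if Even m then a else b) := by
          rw [alternatingWord_succ'] at h'
          exact (List.cons_eq_cons.mp h').1
        have hx : x = (if Even (m+1) then a else b) := by
          rcases Nat.even_or_odd m with hme | hmo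
          · have hyb : y = a := by rw [hy, if_pos hme]
            have hxa : x = b := by
              rcases hlet x (List.mem_cons_self) with h | h
              · exact absurd (h.trans hyb.symm) hxy
              · exact h
            rw [hxa, if_neg (by simp [Nat.even_add_one, hme])]
          · have hya : y = b := by rw [hy, if_neg (Nat.not_even_iff_odd.mpr hmo)]
            have hxb : x = a := by
              rcases hlet x (List.mem_cons_self) with h | h
              · exact h
              · exact absurd (h.trans hya.symm) hxy
            rw [hxb, if_pos (by simp [Nat.even_add_one, Nat.not_even_iff_odd.mpr hmo])]
        rw [hlen, alternatingWord_succ', ← hx, ← h']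

lemma strip (a b : B) : ∀ (n : ℕ) (w : W), cs.length w = n →
    ∃ (u : W) (γ : List B), (∀ x ∈ γ, x = a ∨ x = b) ∧ w = u * cs.wordProd γ ∧
      cs.length w = cs.length u + γ.length ∧
      ¬ cs.IsRightDescent u a ∧ ¬ cs.IsRightDescent u b := by
  intro n
  induction n using Nat.strong_induction_on with
  | _ n ih =>
    intro w hw
    by_cases hda : cs.IsRightDescent w a
    · have hlen : cs.length (w * cs.simple a) + 1 = cs.length w := by
        rcases cs.length_mul_simple w a with h | h
        · exfalso; unfold CoxeterSystem.IsRightDescent at hda; omega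
        · exact h
      obtain ⟨u, γ, hlet, hfac, hl, hnda, hndb⟩ :=
        ih (cs.length (w * cs.simple a)) (by omega) (w * cs.simple a) rfl
      refine ⟨u, γ ++ [a], ?_, ?_, ?_, hnda, hndb⟩
      · intro x hx
        rcases List.mem_append.1 hx with h | h
        · exact hlet x h
        · left; simpa using h
      · rw [cs.wordProd_append, ← mul_assoc, ← hfac]
        simp [cs.wordProd_cons, cs.wordProd_nil]
      · rw [List.length_append]
        simp only [List.length_cons, List.length_nil]
        omega
    · by_cases hdb : cs.IsRightDescent w b
      · have hlen : cs.length (w * cs.simple b) + 1 = cs.length w := by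
          rcases cs.length_mul_simple w b with h | h
          · exfalso; unfold CoxeterSystem.IsRightDescent at hdb; omega
          · exact h
        obtain ⟨u, γ, hlet, hfac, hl, hnda, hndb⟩ :=
          ih (cs.length (w * cs.simple b)) (by omega) (w * cs.simple b) rfl
        refine ⟨u, γ ++ [b], ?_, ?_, ?_, hnda, hndb⟩
        · intro x hx
          rcases List.mem_append.1 hx with h | h
          · exact hlet x h
          · right; simpa using h
        · rw [cs.wordProd_append, ← mul_assoc, ← hfac]
          simp [cs.wordProd_cons, cs.wordProd_nil]
        · rw [List.length_append]
          simp only [List.length_cons, List.length_nil]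
          omega
      · exact ⟨w, [], by simp, by simp [cs.wordProd_nil], by simp, hda, hdb⟩

lemma alt_step {i t : B} (hit : i ≠ t) (r : ℕ) (A Bc : ℝ)
    (h : grep cs (cs.wordProd (alternatingWord i t r)) (ee i) = A • ee i + Bc • ee t) :
    grep cs (cs.wordProd (alternatingWord i t (r+1))) (ee i)
      = if Even r then A • ee i + (-(2*kk M i t)*A - Bc) • ee t
        else (-(2*kk M i t)*Bc - A) • ee i + Bc • ee t := by
  rw [alternatingWord_succ', cs.wordProd_cons, map_mul, Module.End.mul_apply, h]
  by_cases hev : Even r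
  · simp only [if_pos hev]
    rw [grep_simple, rflE_apply, bform_add_right, bform_smul_right, bform_smul_right,
      bform_ee_ee, bform_ee_ee, kk_diag, kk_symm t i]
    module
  · simp only [if_neg hev]
    rw [grep_simple, rflE_apply, bform_add_right, bform_smul_right, bform_smul_right,
      bform_ee_ee, bform_ee_ee, kk_diag]
    module

lemma alt_coeffs_inf {i t : B} (hit : i ≠ t) (h0 : M i t = 0) (r : ℕ) :
    ∃ A Bc : ℝ, 0 ≤ A ∧ 0 ≤ Bc ∧
      grep cs (cs.wordProd (alternatingWord i t r)) (ee i) = A • ee i + Bc • ee t := by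
  have hkk : kk M i t = -1 := by rw [kk, if_pos h0]
  suffices h : ∃ A Bc : ℝ, 0 ≤ A ∧ 0 ≤ Bc ∧ (if Even r then Bc ≤ A else A ≤ Bc) ∧
      grep cs (cs.wordProd (alternatingWord i t r)) (ee i) = A • ee i + Bc • ee t by
    obtain ⟨A, Bc, h1, h2, _, h4⟩ := h
    exact ⟨A, Bc, h1, h2, h4⟩
  induction r with
  | zero =>
    refine ⟨1, 0, by norm_num, le_refl 0, by norm_num, ?_⟩
    show grep cs (cs.wordProd []) (ee i) = _
    rw [cs.wordProd_nil, map_one, Module.End.one_apply]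
    module
  | succ n ihn =>
    obtain ⟨A, Bc, hA, hB, hcmp, heq⟩ := ihn
    have hstep := alt_step cs hit n A Bc heq
    rw [hkk] at hstep
    by_cases hev : Even n
    · rw [if_pos hev] at hstep hcmp
      refine ⟨A, 2*A - Bc, hA, by linarith, ?_, by rw [hstep]; module⟩
      rw [if_neg (by simp [Nat.even_add_one, hev])]
      linarith
    · rw [if_neg hev] at hstep hcmp
      refine ⟨2*Bc - A, Bc, by linarith, hB, ?_, by rw [hstep]; module⟩
      rw [if_pos (by simp [Nat.even_add_one, hev])]
      linarith

lemma alt_coeffs_fin {i t : B} (hit : i ≠ t) (h0 : M i t ≠ 0) (r : ℕ) :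
    grep cs (cs.wordProd (alternatingWord i t r)) (ee i)
      = (if Even r then Real.sin (((r:ℝ)+1) * (Real.pi / (M i t : ℝ))) / Real.sin (Real.pi / (M i t : ℝ))
          else Real.sin ((r:ℝ) * (Real.pi / (M i t : ℝ))) / Real.sin (Real.pi / (M i t : ℝ))) • ee i
        + (if Even r then Real.sin ((r:ℝ) * (Real.pi / (M i t : ℝ))) / Real.sin (Real.pi / (M i t : ℝ))
          else Real.sin (((r:ℝ)+1) * (Real.pi / (M i t : ℝ))) / Real.sin (Real.pi / (M i t : ℝ))) • ee t := by
  have h2 : 2 ≤ M i t := two_le_M hit h0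
  have hm2 : (2:ℝ) ≤ (M i t : ℝ) := by exact_mod_cast h2
  set θ : ℝ := Real.pi / (M i t : ℝ) with hθ
  have hθpos : 0 < θ := by rw [hθ]; positivity
  have hθle : θ ≤ Real.pi / 2 := by rw [hθ]; gcongr
  have hs0pos : 0 < Real.sin θ := Real.sin_pos_of_pos_of_lt_pi hθpos (by linarith [Real.pi_pos])
  have hs0ne : Real.sin θ ≠ 0 := ne_of_gt hs0pos
  have hkk : kk M i t = -Real.cos θ := by rw [kk, if_neg h0]
  induction r with
  | zero =>
    simp only [Nat.cast_zero, Even.zero, if_pos, zero_add, zero_mul, Real.sin_zero, zero_div]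
    rw [one_mul, div_self hs0ne]
    show grep cs (cs.wordProd []) (ee i) = _
    rw [cs.wordProd_nil, map_one, Module.End.one_apply]
    module
  | succ n ihn =>
    have hstep := alt_step cs hit n _ _ ihn
    rw [hkk] at hstep
    have key : ∀ x : ℝ, -(2*(-Real.cos θ))*(Real.sin ((x+1)*θ)/Real.sin θ)
        - Real.sin (x*θ)/Real.sin θ = Real.sin ((x+2)*θ)/Real.sin θ := by
      intro x
      have e1 : (x+2)*θ = (x+1)*θ + θ := by ring
      have e2 : x*θ = (x+1)*θ - θ := by ring
      rw [e1, e2, Real.sin_add, Real.sin_sub]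
      field_simp
      ring
    by_cases hev : Even n
    · simp only [if_pos hev] at hstep
      rw [hstep, key (n:ℝ)]
      have hne : ¬ Even (n+1) := by simp [Nat.even_add_one, hev]
      simp only [if_neg hne]
      push_cast
      rw [show (n:ℝ)+1+1 = (n:ℝ)+2 by ring]
    · simp only [if_neg hev] at hstep
      rw [hstep, key (n:ℝ)]
      have hpe : Even (n+1) := Nat.even_add_one.mpr hev
      simp only [if_pos hpe]
      push_cast
      rw [show (n:ℝ)+1+1 = (n:ℝ)+2 by ring]

theorem grep_pos : ∀ (n : ℕ) (w : W), cs.length w = n → ∀ i : B, ¬ cs.IsRightDescent w i →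
    ∀ z : B, 0 ≤ grep cs w (ee i) z := by
  intro n
  induction n using Nat.strong_induction_on with
  | _ n ih =>
    intro w hw i hnd z
    rcases Nat.eq_zero_or_pos n with rfl | hn
    · have h1 : w = 1 := cs.length_eq_zero_iff.1 hw
      rw [h1, map_one, Module.End.one_apply]
      exact ee_nonneg i z
    · have hw1 : w ≠ 1 := by
        intro h; rw [h, cs.length_one] at hw; omega
      obtain ⟨t, hdt⟩ := cs.exists_rightDescent_of_ne_one hw1
      have hit : i ≠ t := by rintro rfl; exact hnd hdt
      obtain ⟨u, γ, hlet, hfac, hlen, hnda, hndb⟩ := strip cs i t (cs.length w) w rfl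
      have hγ : γ ≠ [] := by
        rintro rfl
        rw [cs.wordProd_nil, mul_one] at hfac
        exact hndb (hfac ▸ hdt)
      have hγlen : 1 ≤ γ.length := List.length_pos_iff.mpr hγ
      have hlu : cs.length u < n := by omega
      have hws : cs.length (w * cs.simple i) = cs.length w + 1 := by
        rcases cs.length_mul_simple w i with h | h
        · exact h
        · exact absurd (show cs.IsRightDescent w i from by
            unfold CoxeterSystem.IsRightDescent; omega) hnd
      have hfac2 : w * cs.simple i = u * cs.wordProd (γ ++ [i]) := by
        rw [cs.wordProd_append, hfac]
        simp [cs.wordProd_cons, cs.wordProd_nil, mul_assoc]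
      have hred2 : cs.IsReduced (γ ++ [i]) := by
        unfold CoxeterSystem.IsReduced
        have h1 := cs.length_mul_le u (cs.wordProd (γ ++ [i]))
        have h2 := cs.length_wordProd_le (γ ++ [i])
        rw [← hfac2] at h1
        simp only [List.length_append, List.length_cons, List.length_nil] at *
        omega
      have hlet2 : ∀ x ∈ γ ++ [i], x = i ∨ x = t := by
        intro x hx
        rcases List.mem_append.1 hx with h | h
        · exact hlet x h
        · left; simpa using h
      have hl : (γ ++ [i]).length = γ.length + 1 := by simp
      rcases two_letter_reduced cs hit (γ ++ [i]) hlet2 hred2 with halt | halt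
      · exfalso
        rw [hl] at halt
        have h1 : (γ ++ [i]).getLast? = some i := List.getLast?_concat
        rw [halt, CoxeterSystem.alternatingWord_succ, List.concat_eq_append,
          List.getLast?_concat] at h1
        exact hit (Option.some.inj h1).symm
      · rw [hl] at halt
        have hγalt : γ = alternatingWord i t γ.length := by
          have h2 : γ ++ [i] = alternatingWord i t γ.length ++ [i] := by
            rw [halt, CoxeterSystem.alternatingWord_succ, List.concat_eq_append]
          exact List.append_cancel_right h2
        have hbound : M i t = 0 ∨ γ.length + 1 ≤ M i t := by
          by_cases h0 : M i t = 0
          · left; exact h0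
          · right
            by_contra hcon
            push_neg at hcon
            have hMti : M t i ≠ 0 := by rw [M.symmetric t i]; exact h0
            have hnred := cs.not_isReduced_alternatingWord t i hMti
              (m := γ.length + 1) (by rw [M.symmetric t i]; omega)
            rw [← halt] at hnred
            exact hnred hred2
        obtain ⟨A, Bc, hA, hB, hcoef⟩ : ∃ A Bc : ℝ, 0 ≤ A ∧ 0 ≤ Bc ∧
            grep cs (cs.wordProd γ) (ee i) = A • ee i + Bc • ee t := by
          rcases hbound with h0 | hb
          · obtain ⟨A, Bc, hA, hB, h⟩ := alt_coeffs_inf cs hit h0 γ.length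
            rw [← hγalt] at h
            exact ⟨A, Bc, hA, hB, h⟩
          · have h0 : M i t ≠ 0 := by omega
            have hfin := alt_coeffs_fin cs hit h0 γ.length
            rw [← hγalt] at hfin
            have hm2 : (2:ℝ) ≤ (M i t : ℝ) := by exact_mod_cast two_le_M hit h0
            set θ : ℝ := Real.pi / (M i t : ℝ) with hθ
            have hθpos : 0 < θ := by rw [hθ]; positivity
            have hθle : θ ≤ Real.pi / 2 := by rw [hθ]; gcongr
            have hs0pos : 0 < Real.sin θ :=
              Real.sin_pos_of_pos_of_lt_pi hθpos (by linarith [Real.pi_pos])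
            have hsin : ∀ x : ℝ, 0 ≤ x → x ≤ (M i t : ℝ) → 0 ≤ Real.sin (x * θ) / Real.sin θ := by
              intro x hx0 hxm
              apply div_nonneg _ hs0pos.le
              apply Real.sin_nonneg_of_nonneg_of_le_pi
              · positivity
              · have hMθ : (M i t : ℝ) * θ = Real.pi := by
                  rw [hθ]
                  field_simp
                nlinarith [mul_le_mul_of_nonneg_right hxm hθpos.le]
            have hcast : ((γ.length : ℝ) + 1) ≤ (M i t : ℝ) := by
              exact_mod_cast hb
            refine ⟨_, _, ?_, ?_, hfin⟩
            · split_ifs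
              · exact hsin _ (by positivity) hcast
              · exact hsin _ (by positivity) (by linarith)
            · split_ifs
              · exact hsin _ (by positivity) (by linarith)
              · exact hsin _ (by positivity) hcast
        have hfinal : grep cs w (ee i) = A • (grep cs u (ee i)) + Bc • (grep cs u (ee t)) := by
          rw [hfac, map_mul, Module.End.mul_apply, hcoef, map_add, map_smul, map_smul]
        rw [hfinal]
        have h1 := ih (cs.length u) hlu u rfl i hnda z
        have h2 := ih (cs.length u) hlu u rfl t hndb z
        simp only [Pi.add_apply, Pi.smul_apply, smul_eq_mul]
        exact add_nonneg (mul_nonneg hA h1) (mul_nonneg hB h2)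

lemma grep_nonpos_of_descent {w : W} {i : B} (hd : cs.IsRightDescent w i) (z : B) :
    grep cs w (ee i) z ≤ 0 := by
  set w1 := w * cs.simple i with hw1
  have hnd : ¬ cs.IsRightDescent w1 i := by
    unfold CoxeterSystem.IsRightDescent at hd ⊢
    rw [hw1, cs.simple_mul_simple_cancel_right]
    omega
  have hpos := grep_pos cs (cs.length w1) w1 rfl i hnd z
  have heq : grep cs w (ee i) = -(grep cs w1 (ee i)) := by
    have : w = w1 * cs.simple i := by rw [hw1, cs.simple_mul_simple_cancel_right]
    rw [this, map_mul, Module.End.mul_apply, grep_simple, rflE_ee_self, map_neg]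
  rw [heq, Pi.neg_apply]
  linarith


end Positivity

lemma bform_neg_right (u v : B → ℝ) : bform M u (-v) = -(bform M u v) := by
  rw [← neg_one_smul ℝ v, bform_smul_right]; ring

section Uniqueness

variable (cs : CoxeterSystem M W)

lemma simple_injective : Function.Injective cs.simple := by
  intro x y h
  by_contra hxy
  have h1 : grep cs (cs.simple x) (ee x) x = -1 := by
    rw [grep_simple, rflE_ee_self]
    simp
  have h2 : grep cs (cs.simple y) (ee x) x = 1 := by
    rw [grep_simple, rflE_apply, Pi.sub_apply, Pi.smul_apply, ee_apply_ne hxy]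
    simp
  rw [h] at h1
  rw [h1] at h2
  norm_num at h2

lemma eq_one_of_all_pos {X : Set B} {u : W} (hu : u ∈ parabolic cs X)
    (hpos : ∀ x ∈ X, ∃ y, grep cs u (ee x) = ee y) : u = 1 := by
  by_contra h1
  obtain ⟨y₀, hy₀⟩ := cs.exists_rightDescent_of_ne_one h1
  have hneg : ∀ z, grep cs u (ee y₀) z ≤ 0 := grep_nonpos_of_descent cs hy₀
  by_cases hyX : y₀ ∈ X
  · obtain ⟨y, hy⟩ := hpos y₀ hyX
    have h2 := hneg y
    rw [hy, ee_apply_self] at h2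
    linarith
  · have h3 := grep_parab_coord cs hu (ee y₀) y₀ hyX
    have h2 := hneg y₀
    rw [h3, ee_apply_self] at h2
    linarith

lemma omega_all_neg {X : Set B} (hirr : IsIrred M X) {w : W} (hw : IsOmega cs X w) :
    ∀ x ∈ X, ∃ y ∈ X, grep cs w (ee x) = -(ee y) := by
  intro x₀ hx₀
  classical
  set A : Set B := {x | x ∈ X ∧ ∃ y ∈ X,
    w * cs.simple x * w⁻¹ = cs.simple y ∧ grep cs w (ee x) = ee y} with hA
  set Bs : Set B := {x | x ∈ X ∧ ∃ y ∈ X,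
    w * cs.simple x * w⁻¹ = cs.simple y ∧ grep cs w (ee x) = -(ee y)} with hBs
  have hcover : X ⊆ A ∪ Bs := by
    intro x hx
    obtain ⟨y, hyX, hc⟩ := hw.2.2 x hx
    rcases grep_conj cs hc with h | h
    · left; exact ⟨hx, y, hyX, hc, h⟩
    · right; exact ⟨hx, y, hyX, hc, h⟩
  have hAX : A ⊆ X := fun x hx => hx.1
  have hBX : Bs ⊆ X := fun x hx => hx.1
  have hdisj : Disjoint A Bs := by
    rw [Set.disjoint_left]
    rintro x ⟨_, y, hyX, hc, hp⟩ ⟨_, y', hy'X, hc', hn⟩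
    have h1 : ee y = -(ee y') := by rw [← hp, hn]
    have h2 := congrFun h1 y
    rw [ee_apply_self, Pi.neg_apply] at h2
    rcases eq_or_ne y y' with rfl | hne
    · rw [ee_apply_self] at h2; linarith
    · rw [ee_apply_ne hne] at h2; linarith
  have hnotboth : A = ∅ ∨ Bs = ∅ := by
    by_contra hcon
    push_neg at hcon
    obtain ⟨hAne, hBne⟩ := hcon
    apply hirr
    refine ⟨A, Bs, hAne, hBne,
      hdisj, Set.Subset.antisymm (Set.union_subset hAX hBX) hcover, ?_⟩
    rintro x ⟨hxX, yx, hyxX, hcx, hpx⟩ y ⟨hyX, yy, hyyX, hcy, hny⟩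
    have hxy : x ≠ y := by
      rintro rfl
      exact (Set.disjoint_left.mp hdisj ⟨hxX, yx, hyxX, hcx, hpx⟩) ⟨hyX, yy, hyyX, hcy, hny⟩
    have hyxyy : yx ≠ yy := by
      rintro rfl
      have hsum : grep cs w (ee x + ee y) = 0 := by
        rw [map_add, hpx, hny]
        simp
      have hzero : ee x + ee y = 0 := by
        have h2 : grep cs w⁻¹ (grep cs w (ee x + ee y)) = grep cs w⁻¹ 0 := by rw [hsum]
        rw [← Module.End.mul_apply, ← map_mul, inv_mul_cancel, map_one, Module.End.one_apply,
          map_zero] at h2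
        exact h2
      have h3 := congrFun hzero x
      rw [Pi.add_apply, ee_apply_self, ee_apply_ne hxy] at h3
      norm_num at h3
    have hkk1 : -(kk M yx yy) = kk M x y := by
      have hinv := bform_grep cs w (ee x) (ee y)
      rw [hpx, hny, bform_neg_right, bform_ee_ee, bform_ee_ee] at hinv
      exact hinv
    have h0 : kk M x y = 0 := by
      have ha := kk_nonpos (M := M) hxy
      have hb := kk_nonpos (M := M) hyxyy
      linarith
    exact M_eq_two_of_kk_eq_zero hxy h0
  rcases hnotboth with hAe | hBe
  · have hx₀B : x₀ ∈ Bs := by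
      rcases hcover hx₀ with h | h
      · rw [hAe] at h; exact absurd h (Set.notMem_empty x₀)
      · exact h
    obtain ⟨_, y, hyX, _, hny⟩ := hx₀B
    exact ⟨y, hyX, hny⟩
  · exfalso
    apply hw.2.1
    apply eq_one_of_all_pos cs hw.1
    intro x hx
    rcases hcover hx with h | h
    · obtain ⟨_, y, _, _, hp⟩ := h; exact ⟨y, hp⟩
    · rw [hBe] at h; exact absurd h (Set.notMem_empty x)

theorem omega_unique {X : Set B} (hirr : IsIrred M X) {w w' : W}
    (hw : IsOmega cs X w) (hw' : IsOmega cs X w') : w = w' := by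
  classical
  have hwinv : IsOmega cs X w'⁻¹ := by
    refine ⟨inv_mem hw'.1, fun h => hw'.2.1 (by rwa [inv_eq_one] at h), ?_⟩
    have hσ : ∀ p : X, ∃ q : X, w' * cs.simple (p : B) * w'⁻¹ = cs.simple (q : B) := by
      rintro ⟨x, hx⟩
      obtain ⟨y, hy, hc⟩ := hw'.2.2 x hx
      exact ⟨⟨y, hy⟩, hc⟩
    choose σ hσc using hσ
    have hinj : Function.Injective σ := by
      intro p q hpq
      have h1 : cs.simple (σ p : B) = cs.simple (σ q : B) := by rw [hpq]
      rw [← hσc p, ← hσc q] at h1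
      have h2 : cs.simple (p : B) = cs.simple (q : B) := by
        have h3 := mul_right_cancel h1
        exact mul_left_cancel h3
      exact Subtype.ext (simple_injective cs h2)
    have hsurj : Function.Surjective σ := Finite.surjective_of_injective hinj
    intro x hx
    obtain ⟨p, hp⟩ := hsurj ⟨x, hx⟩
    refine ⟨(p : B), p.2, ?_⟩
    have h4 := hσc p
    rw [hp] at h4
    rw [← h4]
    group
  have hnegw := omega_all_neg cs hirr hw
  have hnegwinv := omega_all_neg cs hirr hwinv
  set u := w'⁻¹ * w with hu
  have huX : u ∈ parabolic cs X := mul_mem (inv_mem hw'.1) hw.1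
  have hupos : ∀ x ∈ X, ∃ y, grep cs u (ee x) = ee y := by
    intro x hx
    obtain ⟨y, hyX, hgy⟩ := hnegw x hx
    obtain ⟨z, hzX, hgz⟩ := hnegwinv y hyX
    refine ⟨z, ?_⟩
    rw [hu, map_mul, Module.End.mul_apply, hgy, map_neg, hgz]
    simp
  have hueq : u = 1 := eq_one_of_all_pos cs huX hupos
  have : w'⁻¹ * w = 1 := hueq
  exact (inv_mul_eq_one.mp this).symm

end Uniqueness



/-! ### Transfer between the ambient system and a parabolic subsystem -/

section Transfer

variable {W' : Type*} [Group W']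
variable (cs : CoxeterSystem M W) {T : Set B} (cs' : CoxeterSystem (restrictMatrix M T) W')

lemma simple_ne_one (i : B) : cs.simple i ≠ 1 := by
  intro h
  have h1 := cs.length_simple i
  rw [h, cs.length_one] at h1
  omega

lemma restrict_liftable :
    (restrictMatrix M T).IsLiftable (fun x : T => cs.simple (x : B)) := by
  intro x y
  exact cs.simple_mul_simple_pow (x : B) (y : B)

/-- The canonical homomorphism from the group of the restricted system. -/
def emb : W' →* W := cs'.lift ⟨fun x => cs.simple (x : B), restrict_liftable (T := T) cs⟩

@[simp] lemma emb_simple (x : T) : emb cs cs' (cs'.simple x) = cs.simple (x : B) :=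
  cs'.lift_apply_simple (restrict_liftable (T := T) cs) x

lemma parabolic_map (T' : Set T) :
    (parabolic cs' T').map (emb cs cs') = parabolic cs ((↑) '' T' : Set B) := by
  unfold parabolic
  rw [MonoidHom.map_closure]
  congr 1
  rw [← Set.image_comp, ← Set.image_comp]
  exact Set.image_congr fun x _ => emb_simple cs cs' x

lemma mem_parabolic_iff (T' : Set T) (v : W) :
    v ∈ parabolic cs ((↑) '' T' : Set B) ↔ ∃ w ∈ parabolic cs' T', emb cs cs' w = v := by
  rw [← parabolic_map cs cs']
  exact Subgroup.mem_map

lemma isIrred_transfer (T' : Set T) :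
    IsIrred (restrictMatrix M T) T' ↔ IsIrred M ((↑) '' T' : Set B) := by
  constructor
  · intro h hex
    apply h
    obtain ⟨X₁, X₂, h1, h2, hdisj, huni, hcross⟩ := hex
    have hsub : X₁ ∪ X₂ ⊆ (↑) '' T' := huni.le
    refine ⟨(↑) ⁻¹' X₁, (↑) ⁻¹' X₂, ?_, ?_, ?_, ?_, ?_⟩
    · obtain ⟨x, hx⟩ := h1
      obtain ⟨p, _, rfl⟩ := hsub (Set.mem_union_left _ hx)
      exact ⟨p, hx⟩
    · obtain ⟨x, hx⟩ := h2
      obtain ⟨p, _, rfl⟩ := hsub (Set.mem_union_right _ hx)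
      exact ⟨p, hx⟩
    · exact hdisj.preimage _
    · apply Set.Subset.antisymm
      · rintro p (hp | hp)
        · obtain ⟨q, hq, hval⟩ := hsub (Set.mem_union_left _ hp)
          rwa [show q = p from Subtype.ext hval] at hq
        · obtain ⟨q, hq, hval⟩ := hsub (Set.mem_union_right _ hp)
          rwa [show q = p from Subtype.ext hval] at hq
      · intro p hp
        have : (p : B) ∈ X₁ ∪ X₂ := huni.ge ⟨p, hp, rfl⟩
        exact this
    · intro x hx y hy
      exact hcross _ hx _ hy
  · intro h hex
    apply h
    obtain ⟨Y₁, Y₂, h1, h2, hdisj, huni, hcross⟩ := hex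
    refine ⟨(↑) '' Y₁, (↑) '' Y₂, h1.image _, h2.image _,
      Set.disjoint_image_of_injective Subtype.val_injective hdisj, ?_, ?_⟩
    · rw [← Set.image_union, huni]
    · rintro _ ⟨x, hx, rfl⟩ _ ⟨y, hy, rfl⟩
      exact hcross x hx y hy

lemma F_transfer (hinj : Function.Injective (emb cs cs')) (T' : Set T) : ((↑) '' T' : Set B) ∈ F cs ↔ T' ∈ F cs' := by
  have hset : (parabolic cs ((↑) '' T' : Set B) : Set W)
      = emb cs cs' '' (parabolic cs' T' : Set W') := by
    rw [← parabolic_map cs cs']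
    rfl
  constructor
  · rintro ⟨hne, hfin, hirr⟩
    refine ⟨?_, ?_, (isIrred_transfer (M := M) T').mpr hirr⟩
    · obtain ⟨x, p, hp, rfl⟩ := hne
      exact ⟨p, hp⟩
    · rw [hset] at hfin
      exact Set.Finite.of_finite_image hfin (hinj.injOn)
  · rintro ⟨hne, hfin, hirr⟩
    refine ⟨?_, ?_, (isIrred_transfer (M := M) T').mp hirr⟩
    · obtain ⟨p, hp⟩ := hne
      exact ⟨(p : B), p, hp, rfl⟩
    · rw [hset]
      exact hfin.image _

lemma isOmega_emb (hinj : Function.Injective (emb cs cs')) {T' : Set T} {w : W'}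
    (h : IsOmega cs' T' w) :
    IsOmega cs ((↑) '' T' : Set B) (emb cs cs' w) := by
  obtain ⟨hmem, hne, hconj⟩ := h
  refine ⟨(mem_parabolic_iff cs cs' T' _).mpr ⟨w, hmem, rfl⟩, ?_, ?_⟩
  · intro h1
    apply hne
    apply hinj
    rw [h1, map_one]
  · rintro _ ⟨x, hx, rfl⟩
    obtain ⟨y, hy, hc⟩ := hconj x hx
    refine ⟨(y : B), ⟨y, hy, rfl⟩, ?_⟩
    have := congrArg (emb cs cs') hc
    rw [map_mul, map_mul, map_inv, emb_simple, emb_simple] at this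
    exact this

lemma isOmega_emb_rev (hinj : Function.Injective (emb cs cs')) {T' : Set T} {v : W}
    (h : IsOmega cs ((↑) '' T' : Set B) v) :
    ∃ w : W', emb cs cs' w = v ∧ IsOmega cs' T' w := by
  obtain ⟨hmem, hne, hconj⟩ := h
  obtain ⟨w, hw, rfl⟩ := (mem_parabolic_iff cs cs' T' v).mp hmem
  refine ⟨w, rfl, hw, ?_, ?_⟩
  · rintro rfl
    rw [map_one] at hne
    exact hne rfl
  · intro x hx
    obtain ⟨b, hb, hc⟩ := hconj (x : B) ⟨x, hx, rfl⟩
    obtain ⟨y, hy, rfl⟩ := hb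
    refine ⟨y, hy, ?_⟩
    apply hinj
    rw [map_mul, map_mul, map_inv, emb_simple, emb_simple]
    exact hc

lemma omega_emb (hinj : Function.Injective (emb cs cs')) {T' : Set T}
    (hirr : IsIrred M ((↑) '' T' : Set B)) :
    omega cs ((↑) '' T' : Set B) = emb cs cs' (omega cs' T') := by
  unfold omega
  by_cases h : ∃ v, IsOmega cs ((↑) '' T' : Set B) v
  · rw [dif_pos h]
    obtain ⟨w0, _, hw0⟩ := isOmega_emb_rev cs cs' hinj h.choose_spec
    have h' : ∃ w, IsOmega cs' T' w := ⟨w0, hw0⟩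
    rw [dif_pos h']
    exact omega_unique cs hirr h.choose_spec (isOmega_emb cs cs' hinj h'.choose_spec)
  · rw [dif_neg h]
    have h' : ¬ ∃ w, IsOmega cs' T' w :=
      fun ⟨w, hw⟩ => h ⟨emb cs cs' w, isOmega_emb cs cs' hinj hw⟩
    rw [dif_neg h', map_one]

lemma omegaSet_emb (hinj : Function.Injective (emb cs cs')) {T' Y' : Set T}
    (hirr : IsIrred M ((↑) '' T' : Set B))
    (hsimple : ∀ z : B, z ∉ T → ∀ g : W', cs.simple z ≠ emb cs cs' g) :
    omegaSet cs ((↑) '' T' : Set B) ((↑) '' Y' : Set B) = (↑) '' (omegaSet cs' T' Y') := by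
  unfold omegaSet
  rw [omega_emb cs cs' hinj hirr]
  ext z
  constructor
  · rintro ⟨_, ⟨y', hy', rfl⟩, hz⟩
    have hz' : cs.simple z
        = emb cs cs' (omega cs' T' * cs'.simple y' * (omega cs' T')⁻¹) := by
      rw [map_mul, map_mul, map_inv, emb_simple]
      exact hz
    have hzT : z ∈ T := by
      by_contra hzT
      exact hsimple z hzT _ hz'
    refine ⟨⟨z, hzT⟩, ⟨y', hy', ?_⟩, rfl⟩
    apply hinj
    rw [map_mul, map_mul, map_inv, emb_simple, emb_simple]
    exact hz
  · rintro ⟨z', ⟨y', hy', hz'⟩, rfl⟩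
    refine ⟨(y' : B), ⟨y', hy', rfl⟩, ?_⟩
    have := congrArg (emb cs cs') hz'
    rw [map_mul, map_mul, map_inv, emb_simple, emb_simple] at this
    exact this

end Transfer


end Geom




/-! ### Presented-group infrastructure for the cactus group -/

lemma presented_rel {α : Type*} {rels : Set (FreeGroup α)} {r : FreeGroup α} (h : r ∈ rels) :
    PresentedGroup.mk rels r = 1 := by
  have hr : r ∈ Subgroup.normalClosure rels := Subgroup.subset_normalClosure h
  exact (QuotientGroup.eq_one_iff r).mpr hr

section CactusLemmas

variable (cs : CoxeterSystem M W)

lemma gen_r1 (X : F cs) : gen cs X * gen cs X = 1 := by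
  have h := presented_rel (rels := cactusRels cs) (Or.inl ⟨X, rfl⟩)
  rw [map_mul] at h
  exact h

lemma gen_r2 {X Y Z : F cs} (h1 : (Y : Set B) ∈ Omega0 cs X)
    (h2 : (Z : Set B) = omegaSet cs (X : Set B) (Y : Set B)) :
    gen cs X * gen cs Y = gen cs Z * gen cs X := by
  have h := presented_rel (rels := cactusRels cs) (Or.inr (Or.inl ⟨X, Y, Z, h1, h2, rfl⟩))
  rw [map_mul, map_inv, map_mul, map_mul] at h
  rw [mul_inv_eq_one] at h
  exact h

lemma gen_r3 {X Y : F cs} (h1 : (Y : Set B) ∈ OmegaInf cs X) :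
    gen cs X * gen cs Y = gen cs Y * gen cs X := by
  have h := presented_rel (rels := cactusRels cs) (Or.inr (Or.inr ⟨X, Y, h1, rfl⟩))
  rw [map_mul, map_inv, map_mul, map_mul] at h
  rw [mul_inv_eq_one] at h
  exact h

end CactusLemmas

/-! ### Restriction of index sets -/

def rst (T : Set B) (X : Set B) : Set T := {p : T | (p : B) ∈ X}

lemma image_rst {T X : Set B} (h : X ⊆ T) : ((↑) '' (rst T X) : Set B) = X := by
  ext b
  constructor
  · rintro ⟨p, hp, rfl⟩; exact hp
  · intro hb; exact ⟨⟨b, h hb⟩, hb, rfl⟩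

lemma rst_image (T : Set B) (A : Set T) : rst T ((↑) '' A) = A := by
  ext p
  constructor
  · rintro ⟨q, hq, hval⟩
    rwa [show q = p from Subtype.ext hval] at hq
  · intro hp; exact ⟨p, hp, rfl⟩

lemma image_val_subset {T : Set B} (A : Set T) : ((↑) '' A : Set B) ⊆ T := by
  rintro _ ⟨p, _, rfl⟩; exact p.2

lemma rst_ssubset {T X Y : Set B} (hX : X ⊆ T) (h : Y ⊂ X) : rst T Y ⊂ rst T X := by
  constructor
  · intro p hp; exact h.1 hp
  · intro hsub
    obtain ⟨b, hbX, hbY⟩ := Set.exists_of_ssubset h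
    exact hbY (hsub (show (⟨b, hX hbX⟩ : T) ∈ rst T X from hbX))

lemma image_ssubset {T : Set B} {A C : Set T} (h : A ⊂ C) :
    ((↑) '' A : Set B) ⊂ ((↑) '' C : Set B) := by
  constructor
  · exact Set.image_mono h.1
  · intro hsub
    apply h.2
    intro p hp
    obtain ⟨q, hq, hval⟩ := hsub ⟨p, hp, rfl⟩
    rwa [show q = p from Subtype.ext hval] at hq

lemma prod_hom_ext {G₁ G₂ H : Type*} [Group G₁] [Group G₂] [Group H]
    {φ ψ : G₁ × G₂ →* H} (h1 : ∀ a, φ (a, 1) = ψ (a, 1)) (h2 : ∀ b, φ (1, b) = ψ (1, b)) :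
    φ = ψ := by
  ext ⟨a, b⟩
  have hab : (a, b) = (a, (1 : G₂)) * ((1 : G₁), b) := by
    rw [Prod.mk_mul_mk, mul_one, one_mul]
  rw [hab, map_mul, map_mul, h1, h2]


/-- If `S` partitions as `S₁ ∪ S₂` with all labels `2` across the partition, then
`C(W,S) ≅ C(W_{S₁},S₁) × C(W_{S₂},S₂)`. -/
theorem statement14 {B W W₁ W₂ : Type*} [Fintype B] [Group W] [Group W₁] [Group W₂]
    {M : CoxeterMatrix B} (cs : CoxeterSystem M W)
    (S₁ S₂ : Set B) (h1 : S₁.Nonempty) (h2 : S₂.Nonempty) (hd : Disjoint S₁ S₂)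
    (hu : S₁ ∪ S₂ = Set.univ) (hcomm : ∀ s ∈ S₁, ∀ t ∈ S₂, M s t = 2)
    (cs₁ : CoxeterSystem (restrictMatrix M S₁) W₁)
    (cs₂ : CoxeterSystem (restrictMatrix M S₂) W₂) :
    Nonempty (Cactus cs ≃* Cactus cs₁ × Cactus cs₂) := by
  classical
  have mem2 : ∀ b : B, b ∉ S₁ → b ∈ S₂ := by
    intro b hb
    have hb2 : b ∈ S₁ ∪ S₂ := by rw [hu]; exact Set.mem_univ b
    rcases hb2 with h | h
    · exact absurd h hb
    · exact h
  have mem1 : ∀ b : B, b ∉ S₂ → b ∈ S₁ := by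
    intro b hb
    have hb2 : b ∈ S₁ ∪ S₂ := by rw [hu]; exact Set.mem_univ b
    rcases hb2 with h | h
    · exact h
    · exact absurd h hb
  -- the splitting homomorphism
  have hlift : M.IsLiftable (fun b : B =>
      if h : b ∈ S₁ then ((cs₁.simple ⟨b, h⟩ : W₁), (1 : W₂))
      else ((1 : W₁), cs₂.simple ⟨b, mem2 b h⟩)) := by
    intro b b'
    dsimp only
    by_cases hb : b ∈ S₁
    · by_cases hb' : b' ∈ S₁
      · rw [dif_pos hb, dif_pos hb', Prod.mk_mul_mk, one_mul, Prod.pow_mk, Prod.mk_eq_one]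
        exact ⟨cs₁.simple_mul_simple_pow ⟨b, hb⟩ ⟨b', hb'⟩, one_pow _⟩
      · rw [dif_pos hb, dif_neg hb', Prod.mk_mul_mk, one_mul, mul_one, Prod.pow_mk,
          Prod.mk_eq_one, hcomm b hb b' (mem2 b' hb')]
        exact ⟨cs₁.simple_sq _, cs₂.simple_sq _⟩
    · by_cases hb' : b' ∈ S₁
      · rw [dif_neg hb, dif_pos hb', Prod.mk_mul_mk, one_mul, mul_one, Prod.pow_mk,
          Prod.mk_eq_one, M.symmetric b b', hcomm b' hb' b (mem2 b hb)]
        exact ⟨cs₁.simple_sq _, cs₂.simple_sq _⟩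
      · rw [dif_neg hb, dif_neg hb', Prod.mk_mul_mk, one_mul, Prod.pow_mk, Prod.mk_eq_one]
        exact ⟨one_pow _, cs₂.simple_mul_simple_pow ⟨b, mem2 b hb⟩ ⟨b', mem2 b' hb'⟩⟩
  obtain ⟨ρs, hρs⟩ : ∃ ρs : W →* W₁ × W₂, ∀ b : B, ρs (cs.simple b) =
      (if h : b ∈ S₁ then ((cs₁.simple ⟨b, h⟩ : W₁), (1 : W₂))
       else ((1 : W₁), cs₂.simple ⟨b, mem2 b h⟩)) :=
    ⟨cs.lift ⟨_, hlift⟩, fun b => cs.lift_apply_simple hlift b⟩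
  have hcomp₁ : ∀ w : W₁, ρs (emb cs cs₁ w) = (w, 1) := by
    have hh : ρs.comp (emb cs cs₁) = MonoidHom.inl W₁ W₂ := by
      apply cs₁.ext_simple
      intro p
      rw [MonoidHom.comp_apply, emb_simple, hρs, dif_pos p.2]
      rfl
    intro w
    exact DFunLike.congr_fun hh w
  have hcomp₂ : ∀ w : W₂, ρs (emb cs cs₂ w) = (1, w) := by
    have hh : ρs.comp (emb cs cs₂) = MonoidHom.inr W₁ W₂ := by
      apply cs₂.ext_simple
      intro p
      have hp1 : (p : B) ∉ S₁ := fun h => Set.disjoint_left.mp hd h p.2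
      rw [MonoidHom.comp_apply, emb_simple, hρs, dif_neg hp1]
      rfl
    intro w
    exact DFunLike.congr_fun hh w
  have hinj₁ : Function.Injective (emb cs cs₁) := by
    intro a b h
    have := congrArg ρs h
    rw [hcomp₁, hcomp₁, Prod.mk.injEq] at this
    exact this.1
  have hinj₂ : Function.Injective (emb cs cs₂) := by
    intro a b h
    have := congrArg ρs h
    rw [hcomp₂, hcomp₂, Prod.mk.injEq] at this
    exact this.2
  have hsimple₁ : ∀ z : B, z ∉ S₁ → ∀ g : W₁, cs.simple z ≠ emb cs cs₁ g := by
    intro z hz g h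
    have h1 := congrArg ρs h
    rw [hρs, dif_neg hz, hcomp₁, Prod.mk.injEq] at h1
    exact simple_ne_one cs₂ _ h1.2
  have hsimple₂ : ∀ z : B, z ∉ S₂ → ∀ g : W₂, cs.simple z ≠ emb cs cs₂ g := by
    intro z hz g h
    have h1 := congrArg ρs h
    rw [hρs, dif_pos (mem1 z hz), hcomp₂, Prod.mk.injEq] at h1
    exact simple_ne_one cs₁ _ h1.1
  -- dichotomy
  have hdich : ∀ X : Set B, X ∈ F cs → X ⊆ S₁ ∨ X ⊆ S₂ := by
    intro X hX
    by_contra hcon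
    push_neg at hcon
    obtain ⟨hn1, hn2⟩ := hcon
    rw [Set.not_subset] at hn1 hn2
    obtain ⟨a, haX, ha1⟩ := hn1
    obtain ⟨b, hbX, hb2⟩ := hn2
    apply hX.2.2
    refine ⟨X ∩ S₂, X ∩ S₁, ⟨a, haX, mem2 a ha1⟩, ⟨b, hbX, mem1 b hb2⟩, ?_, ?_, ?_⟩
    · exact (hd.symm).mono Set.inter_subset_right Set.inter_subset_right
    · rw [← Set.inter_union_distrib_left, Set.union_comm, hu, Set.inter_univ]
    · intro x hx y hy
      rw [M.symmetric x y]
      exact hcomm y hy.2 x hx.2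
  have hnotboth : ∀ X : Set B, X.Nonempty → X ⊆ S₂ → ¬ X ⊆ S₁ := by
    rintro X ⟨x, hx⟩ h2 h1
    exact Set.disjoint_left.mp hd (h1 hx) (h2 hx)
  -- F-membership converters
  have hF₁ : ∀ X : F cs, (X : Set B) ⊆ S₁ → rst S₁ (X : Set B) ∈ F cs₁ := by
    intro X h
    apply (F_transfer cs cs₁ hinj₁ (rst S₁ (X : Set B))).mp
    rw [image_rst h]
    exact X.2
  have hF₂ : ∀ X : F cs, (X : Set B) ⊆ S₂ → rst S₂ (X : Set B) ∈ F cs₂ := by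
    intro X h
    apply (F_transfer cs cs₂ hinj₂ (rst S₂ (X : Set B))).mp
    rw [image_rst h]
    exact X.2
  have hF₁' : ∀ A : F cs₁, ((↑) '' (A : Set ↥S₁) : Set B) ∈ F cs :=
    fun A => (F_transfer cs cs₁ hinj₁ _).mpr A.2
  have hF₂' : ∀ A : F cs₂, ((↑) '' (A : Set ↥S₂) : Set B) ∈ F cs :=
    fun A => (F_transfer cs cs₂ hinj₂ _).mpr A.2
  -- omegaSet transfer specializations
  have homega₁ : ∀ X Y : Set B, X ∈ F cs → X ⊆ S₁ → Y ⊆ S₁ →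
      omegaSet cs X Y = ((↑) '' (omegaSet cs₁ (rst S₁ X) (rst S₁ Y)) : Set B) := by
    intro X Y hX hX1 hY1
    have h := omegaSet_emb cs cs₁ hinj₁ (T' := rst S₁ X) (Y' := rst S₁ Y)
      (by rw [image_rst hX1]; exact hX.2.2) hsimple₁
    rw [image_rst hX1, image_rst hY1] at h
    exact h
  have homega₂ : ∀ X Y : Set B, X ∈ F cs → X ⊆ S₂ → Y ⊆ S₂ →
      omegaSet cs X Y = ((↑) '' (omegaSet cs₂ (rst S₂ X) (rst S₂ Y)) : Set B) := by
    intro X Y hX hX2 hY2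
    have h := omegaSet_emb cs cs₂ hinj₂ (T' := rst S₂ X) (Y' := rst S₂ Y)
      (by rw [image_rst hX2]; exact hX.2.2) hsimple₂
    rw [image_rst hX2, image_rst hY2] at h
    exact h
  have hred12 : ∀ A : Set ↥S₁, A.Nonempty → ∀ C : Set ↥S₂, C.Nonempty →
      ¬ IsIrred M (((↑) '' A : Set B) ∪ ((↑) '' C : Set B)) := by
    intro A hA C hC hirr
    exact hirr ⟨(↑) '' A, (↑) '' C, hA.image _, hC.image _,
      hd.mono (image_val_subset A) (image_val_subset C), rfl,
      by rintro _ ⟨p, _, rfl⟩ _ ⟨q, _, rfl⟩; exact hcomm _ p.2 _ q.2⟩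
  -- the relator condition for Φ
  have hΦcond : ∀ r ∈ cactusRels cs, FreeGroup.lift (fun X : F cs =>
      if h : (X : Set B) ⊆ S₁ then
        ((gen cs₁ ⟨rst S₁ (X : Set B), hF₁ X h⟩ : Cactus cs₁), (1 : Cactus cs₂))
      else (1, gen cs₂ ⟨rst S₂ (X : Set B), hF₂ X ((hdich _ X.2).resolve_left h)⟩)) r = 1 := by
    intro r hr
    rcases hr with ⟨X, rfl⟩ | ⟨X, Y, Z, hY0, hZ, rfl⟩ | ⟨X, Y, hY0, rfl⟩
    · rw [map_mul]
      simp only [FreeGroup.lift_apply_of]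
      by_cases h : (X : Set B) ⊆ S₁
      · rw [dif_pos h, Prod.mk_mul_mk, Prod.mk_eq_one]
        exact ⟨gen_r1 cs₁ _, mul_one 1⟩
      · rw [dif_neg h, Prod.mk_mul_mk, Prod.mk_eq_one]
        exact ⟨mul_one 1, gen_r1 cs₂ _⟩
    · rw [map_mul, map_inv, map_mul, map_mul]
      simp only [FreeGroup.lift_apply_of]
      rw [mul_inv_eq_one]
      have hYF : (Y : Set B) ∈ F cs := hY0.1
      have hYsub : (Y : Set B) ⊂ (X : Set B) := hY0.2
      rcases hdich _ X.2 with hX1 | hX2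
      · have hY1 : (Y : Set B) ⊆ S₁ := hYsub.1.trans hX1
        have hZeq : (Z : Set B)
            = ((↑) '' (omegaSet cs₁ (rst S₁ (X : Set B)) (rst S₁ (Y : Set B))) : Set B) := by
          rw [hZ]; exact homega₁ _ _ X.2 hX1 hY1
        have hZ1 : (Z : Set B) ⊆ S₁ := by rw [hZeq]; exact image_val_subset _
        rw [dif_pos hX1, dif_pos hY1, dif_pos hZ1, Prod.mk_mul_mk, Prod.mk_mul_mk, mul_one,
          Prod.mk.injEq]
        refine ⟨gen_r2 cs₁ ⟨hF₁ Y hY1, rst_ssubset hX1 hYsub⟩ ?_, rfl⟩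
        show rst S₁ (Z : Set B) = _
        rw [hZeq, rst_image]
      · have hY2 : (Y : Set B) ⊆ S₂ := hYsub.1.trans hX2
        have hXn1 : ¬ (X : Set B) ⊆ S₁ := hnotboth _ X.2.1 hX2
        have hYn1 : ¬ (Y : Set B) ⊆ S₁ := hnotboth _ hYF.1 hY2
        have hZeq : (Z : Set B)
            = ((↑) '' (omegaSet cs₂ (rst S₂ (X : Set B)) (rst S₂ (Y : Set B))) : Set B) := by
          rw [hZ]; exact homega₂ _ _ X.2 hX2 hY2
        have hZ2 : (Z : Set B) ⊆ S₂ := by rw [hZeq]; exact image_val_subset _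
        have hZn1 : ¬ (Z : Set B) ⊆ S₁ := hnotboth _ Z.2.1 hZ2
        rw [dif_neg hXn1, dif_neg hYn1, dif_neg hZn1, Prod.mk_mul_mk, Prod.mk_mul_mk, mul_one,
          Prod.mk.injEq]
        refine ⟨rfl, gen_r2 cs₂ ⟨hF₂ Y hY2, rst_ssubset hX2 hYsub⟩ ?_⟩
        show rst S₂ (Z : Set B) = _
        rw [hZeq, rst_image]
    · rw [map_mul, map_inv, map_mul, map_mul]
      simp only [FreeGroup.lift_apply_of]
      rw [mul_inv_eq_one]
      have hYF : (Y : Set B) ∈ F cs := hY0.1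
      rcases hdich _ X.2 with hX1 | hX2 <;> rcases hdich _ hYF with hY1 | hY2
      · have hni : ¬ IsIrred (restrictMatrix M S₁)
            (rst S₁ (X : Set B) ∪ rst S₁ (Y : Set B)) := by
          intro hi
          apply hY0.2
          have h2 := (isIrred_transfer (M := M) _).mp hi
          rwa [Set.image_union, image_rst hX1, image_rst hY1] at h2
        rw [dif_pos hX1, dif_pos hY1, Prod.mk_mul_mk, Prod.mk_mul_mk, Prod.mk.injEq]
        exact ⟨gen_r3 cs₁ ⟨hF₁ Y hY1, hni⟩, rfl⟩
      · have hYn1 : ¬ (Y : Set B) ⊆ S₁ := hnotboth _ hYF.1 hY2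
        rw [dif_pos hX1, dif_neg hYn1, Prod.mk_mul_mk, Prod.mk_mul_mk, Prod.mk.injEq]
        constructor
        · rw [mul_one, one_mul]
        · rw [mul_one, one_mul]
      · have hXn1 : ¬ (X : Set B) ⊆ S₁ := hnotboth _ X.2.1 hX2
        rw [dif_neg hXn1, dif_pos hY1, Prod.mk_mul_mk, Prod.mk_mul_mk, Prod.mk.injEq]
        constructor
        · rw [mul_one, one_mul]
        · rw [mul_one, one_mul]
      · have hXn1 : ¬ (X : Set B) ⊆ S₁ := hnotboth _ X.2.1 hX2
        have hYn1 : ¬ (Y : Set B) ⊆ S₁ := hnotboth _ hYF.1 hY2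
        have hni : ¬ IsIrred (restrictMatrix M S₂)
            (rst S₂ (X : Set B) ∪ rst S₂ (Y : Set B)) := by
          intro hi
          apply hY0.2
          have h2 := (isIrred_transfer (M := M) _).mp hi
          rwa [Set.image_union, image_rst hX2, image_rst hY2] at h2
        rw [dif_neg hXn1, dif_neg hYn1, Prod.mk_mul_mk, Prod.mk_mul_mk, Prod.mk.injEq]
        exact ⟨rfl, gen_r3 cs₂ ⟨hF₂ Y hY2, hni⟩⟩
  -- relator conditions for Ψ₁ and Ψ₂
  have hΨ₁cond : ∀ r ∈ cactusRels cs₁, FreeGroup.lift (fun A : F cs₁ =>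
      gen cs ⟨((↑) '' (A : Set ↥S₁) : Set B), hF₁' A⟩) r = 1 := by
    intro r hr
    rcases hr with ⟨A, rfl⟩ | ⟨A, C, D, hC0, hD, rfl⟩ | ⟨A, C, hC0, rfl⟩
    · rw [map_mul]
      simp only [FreeGroup.lift_apply_of]
      exact gen_r1 cs _
    · rw [map_mul, map_inv, map_mul, map_mul]
      simp only [FreeGroup.lift_apply_of]
      rw [mul_inv_eq_one]
      apply gen_r2 cs
      · exact ⟨hF₁' C, image_ssubset hC0.2⟩
      · show ((↑) '' (D : Set ↥S₁) : Set B) = _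
        have h := omegaSet_emb cs cs₁ hinj₁ (T' := (A : Set ↥S₁)) (Y' := (C : Set ↥S₁))
          ((isIrred_transfer (M := M) _).mp A.2.2.2) hsimple₁
        rw [h, hD]
    · rw [map_mul, map_inv, map_mul, map_mul]
      simp only [FreeGroup.lift_apply_of]
      rw [mul_inv_eq_one]
      apply gen_r3 cs
      refine ⟨hF₁' C, ?_⟩
      intro hi
      apply hC0.2
      apply (isIrred_transfer (M := M) ((A : Set ↥S₁) ∪ (C : Set ↥S₁))).mpr
      rwa [Set.image_union]
  have hΨ₂cond : ∀ r ∈ cactusRels cs₂, FreeGroup.lift (fun A : F cs₂ =>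
      gen cs ⟨((↑) '' (A : Set ↥S₂) : Set B), hF₂' A⟩) r = 1 := by
    intro r hr
    rcases hr with ⟨A, rfl⟩ | ⟨A, C, D, hC0, hD, rfl⟩ | ⟨A, C, hC0, rfl⟩
    · rw [map_mul]
      simp only [FreeGroup.lift_apply_of]
      exact gen_r1 cs _
    · rw [map_mul, map_inv, map_mul, map_mul]
      simp only [FreeGroup.lift_apply_of]
      rw [mul_inv_eq_one]
      apply gen_r2 cs
      · exact ⟨hF₂' C, image_ssubset hC0.2⟩
      · show ((↑) '' (D : Set ↥S₂) : Set B) = _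
        have h := omegaSet_emb cs cs₂ hinj₂ (T' := (A : Set ↥S₂)) (Y' := (C : Set ↥S₂))
          ((isIrred_transfer (M := M) _).mp A.2.2.2) hsimple₂
        rw [h, hD]
    · rw [map_mul, map_inv, map_mul, map_mul]
      simp only [FreeGroup.lift_apply_of]
      rw [mul_inv_eq_one]
      apply gen_r3 cs
      refine ⟨hF₂' C, ?_⟩
      intro hi
      apply hC0.2
      apply (isIrred_transfer (M := M) ((A : Set ↥S₂) ∪ (C : Set ↥S₂))).mpr
      rwa [Set.image_union]
  -- generator-level commutation
  have hgencomm : ∀ (A : F cs₁) (C : F cs₂),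
      Commute ((PresentedGroup.toGroup hΨ₁cond) (PresentedGroup.of A))
        ((PresentedGroup.toGroup hΨ₂cond) (PresentedGroup.of C)) := by
    intro A C
    rw [PresentedGroup.toGroup.of, PresentedGroup.toGroup.of]
    have h3 := gen_r3 cs (X := ⟨((↑) '' (A : Set ↥S₁) : Set B), hF₁' A⟩)
      (Y := ⟨((↑) '' (C : Set ↥S₂) : Set B), hF₂' C⟩)
      ⟨hF₂' C, hred12 _ A.2.1 _ C.2.1⟩
    exact h3
  have hcommΨ : ∀ (a : Cactus cs₁) (b : Cactus cs₂),
      Commute ((PresentedGroup.toGroup hΨ₁cond) a) ((PresentedGroup.toGroup hΨ₂cond) b) := by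
    intro a b
    have ha : a ∈ Subgroup.comap (PresentedGroup.toGroup hΨ₁cond)
        (Subgroup.centralizer (Set.range (PresentedGroup.toGroup hΨ₂cond))) := by
      apply PresentedGroup.generated_by
      intro A
      rw [Subgroup.mem_comap, Subgroup.mem_centralizer_iff]
      rintro _ ⟨b', rfl⟩
      have hb' : b' ∈ Subgroup.comap (PresentedGroup.toGroup hΨ₂cond)
          (Subgroup.centralizer
            {(PresentedGroup.toGroup hΨ₁cond) (PresentedGroup.of A)}) := by
        apply PresentedGroup.generated_by
        intro C
        rw [Subgroup.mem_comap, Subgroup.mem_centralizer_iff]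
        intro g hg
        rw [Set.mem_singleton_iff] at hg
        rw [hg]
        exact hgencomm A C
      have h5 := Subgroup.mem_centralizer_iff.mp (Subgroup.mem_comap.mp hb')
      exact (h5 _ (Set.mem_singleton _)).symm
    have h6 := Subgroup.mem_centralizer_iff.mp (Subgroup.mem_comap.mp ha)
    exact (h6 _ ⟨b, rfl⟩).symm
  -- computation helpers
  have hΦof : ∀ X : F cs, (PresentedGroup.toGroup hΦcond) (PresentedGroup.of X) =
      (if h : (X : Set B) ⊆ S₁ then
        ((gen cs₁ ⟨rst S₁ (X : Set B), hF₁ X h⟩ : Cactus cs₁), (1 : Cactus cs₂))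
      else (1, gen cs₂ ⟨rst S₂ (X : Set B), hF₂ X ((hdich _ X.2).resolve_left h)⟩)) :=
    fun X => PresentedGroup.toGroup.of hΦcond
  have hΦgen : ∀ X : F cs, (PresentedGroup.toGroup hΦcond) (gen cs X) =
      (if h : (X : Set B) ⊆ S₁ then
        ((gen cs₁ ⟨rst S₁ (X : Set B), hF₁ X h⟩ : Cactus cs₁), (1 : Cactus cs₂))
      else (1, gen cs₂ ⟨rst S₂ (X : Set B), hF₂ X ((hdich _ X.2).resolve_left h)⟩)) :=
    fun X => PresentedGroup.toGroup.of hΦcond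
  have hΨ₁of : ∀ A : F cs₁, (PresentedGroup.toGroup hΨ₁cond) (PresentedGroup.of A)
      = gen cs ⟨((↑) '' (A : Set ↥S₁) : Set B), hF₁' A⟩ :=
    fun A => PresentedGroup.toGroup.of hΨ₁cond
  have hΨ₁gen : ∀ A : F cs₁, (PresentedGroup.toGroup hΨ₁cond) (gen cs₁ A)
      = gen cs ⟨((↑) '' (A : Set ↥S₁) : Set B), hF₁' A⟩ :=
    fun A => PresentedGroup.toGroup.of hΨ₁cond
  have hΨ₂of : ∀ A : F cs₂, (PresentedGroup.toGroup hΨ₂cond) (PresentedGroup.of A)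
      = gen cs ⟨((↑) '' (A : Set ↥S₂) : Set B), hF₂' A⟩ :=
    fun A => PresentedGroup.toGroup.of hΨ₂cond
  have hΨ₂gen : ∀ A : F cs₂, (PresentedGroup.toGroup hΨ₂cond) (gen cs₂ A)
      = gen cs ⟨((↑) '' (A : Set ↥S₂) : Set B), hF₂' A⟩ :=
    fun A => PresentedGroup.toGroup.of hΨ₂cond
  -- the two inverse homomorphisms
  refine ⟨MonoidHom.toMulEquiv (PresentedGroup.toGroup hΦcond)
    (MonoidHom.noncommCoprod (PresentedGroup.toGroup hΨ₁cond)
      (PresentedGroup.toGroup hΨ₂cond) hcommΨ) ?_ ?_⟩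
  · -- Ψ ∘ Φ = id
    apply PresentedGroup.ext
    intro X
    rw [MonoidHom.comp_apply, MonoidHom.id_apply, hΦof]
    by_cases h : (X : Set B) ⊆ S₁
    · rw [dif_pos h, MonoidHom.noncommCoprod_apply]
      dsimp only
      rw [map_one, mul_one, hΨ₁gen]
      exact congrArg PresentedGroup.of (Subtype.ext (image_rst h))
    · rw [dif_neg h, MonoidHom.noncommCoprod_apply]
      dsimp only
      rw [map_one, one_mul, hΨ₂gen]
      exact congrArg PresentedGroup.of
        (Subtype.ext (image_rst ((hdich _ X.2).resolve_left h)))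
  · -- Φ ∘ Ψ = id
    apply prod_hom_ext
    · intro a
      rw [MonoidHom.comp_apply, MonoidHom.id_apply]
      have hΨa : (MonoidHom.noncommCoprod (PresentedGroup.toGroup hΨ₁cond)
          (PresentedGroup.toGroup hΨ₂cond) hcommΨ) ((a, 1) : Cactus cs₁ × Cactus cs₂)
          = (PresentedGroup.toGroup hΨ₁cond) a := by
        rw [MonoidHom.noncommCoprod_apply, map_one, mul_one]
      rw [hΨa]
      have hh : (PresentedGroup.toGroup hΦcond).comp (PresentedGroup.toGroup hΨ₁cond)
          = MonoidHom.inl (Cactus cs₁) (Cactus cs₂) := by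
        apply PresentedGroup.ext
        intro A
        rw [MonoidHom.comp_apply, hΨ₁of, hΦgen, dif_pos (image_val_subset (A : Set ↥S₁))]
        show (_, (1 : Cactus cs₂)) = (PresentedGroup.of A, 1)
        rw [Prod.mk.injEq]
        exact ⟨congrArg PresentedGroup.of (Subtype.ext (rst_image S₁ (A : Set ↥S₁))), rfl⟩
      exact DFunLike.congr_fun hh a
    · intro b
      rw [MonoidHom.comp_apply, MonoidHom.id_apply]
      have hΨb : (MonoidHom.noncommCoprod (PresentedGroup.toGroup hΨ₁cond)
          (PresentedGroup.toGroup hΨ₂cond) hcommΨ) ((1, b) : Cactus cs₁ × Cactus cs₂)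
          = (PresentedGroup.toGroup hΨ₂cond) b := by
        rw [MonoidHom.noncommCoprod_apply, map_one, one_mul]
      rw [hΨb]
      have hh : (PresentedGroup.toGroup hΦcond).comp (PresentedGroup.toGroup hΨ₂cond)
          = MonoidHom.inr (Cactus cs₁) (Cactus cs₂) := by
        apply PresentedGroup.ext
        intro A
        have hA2 : ((↑) '' (A : Set ↥S₂) : Set B) ⊆ S₂ := image_val_subset _
        have hAn1 : ¬ ((↑) '' (A : Set ↥S₂) : Set B) ⊆ S₁ := by
          apply hnotboth _ _ hA2
          exact A.2.1.image _
        rw [MonoidHom.comp_apply, hΨ₂of, hΦgen, dif_neg hAn1]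
        show ((1 : Cactus cs₁), _) = (1, PresentedGroup.of A)
        rw [Prod.mk.injEq]
        exact ⟨rfl, congrArg PresentedGroup.of (Subtype.ext (rst_image S₂ (A : Set ↥S₂)))⟩
      exact DFunLike.congr_fun hh b

end CactusFormal
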